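/- arXiv:1810.11507 — 3 statements merged into one kernel-verified Lean document; each statement's English description precedes it below -/
import Mathlib

section
/- Suppose H is a symmetric positive definite d×d matrix with eigenvalues in [μ, M] (0 < μ ≤ M), and P is a symmetric matrix satisfying ‖P - H‖ ≤ ν in operator norm with ν < μ. Then P is invertible and all eigenvalues λ of P⁻¹H satisfy μ/(M + ν) ≤ λ and λ ≤ M/(μ - ν). -/
open scoped InnerProductSpace

/-- If `H` is symmetric positive definite with eigenvalues in `[μ, M]` and `P` is symmetric with
`‖P - H‖ ≤ ν < μ` (operator norm), then `P` is invertible and every eigenvalue `lam` of `P⁻¹H`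
(equivalently, every generalized eigenvalue: `H v = lam • P v` with `v ≠ 0`) satisfies
`μ/(M + ν) ≤ lam ≤ M/(μ - ν)`. -/
theorem stmt4 (d : ℕ)
    (H P : EuclideanSpace ℝ (Fin d) →L[ℝ] EuclideanSpace ℝ (Fin d))
    (hHsym : IsSelfAdjoint H) (hPsym : IsSelfAdjoint P)
    (μ M ν : ℝ) (hμ : 0 < μ) (hμM : μ ≤ M) (hν0 : 0 ≤ ν) (hνμ : ν < μ)
    (hlow : ∀ x, μ * ‖x‖ ^ 2 ≤ ⟪H x, x⟫_ℝ)
    (hhigh : ∀ x, ⟪H x, x⟫_ℝ ≤ M * ‖x‖ ^ 2)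
    (hPH : ‖P - H‖ ≤ ν) :
    Function.Bijective P ∧
      ∀ (lam : ℝ) (v : EuclideanSpace ℝ (Fin d)), v ≠ 0 → H v = lam • P v →
        μ / (M + ν) ≤ lam ∧ lam ≤ M / (μ - ν) := by
  have key : ∀ x : EuclideanSpace ℝ (Fin d), |⟪(P - H) x, x⟫_ℝ| ≤ ν * ‖x‖ ^ 2 := by
    intro x
    calc |⟪(P - H) x, x⟫_ℝ| ≤ ‖(P - H) x‖ * ‖x‖ := abs_real_inner_le_norm _ _
      _ ≤ (‖P - H‖ * ‖x‖) * ‖x‖ := by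
          gcongr
          exact (P - H).le_opNorm x
      _ ≤ (ν * ‖x‖) * ‖x‖ := by
          gcongr
      _ = ν * ‖x‖ ^ 2 := by ring
  have hdiff : ∀ x : EuclideanSpace ℝ (Fin d),
      ⟪P x, x⟫_ℝ = ⟪H x, x⟫_ℝ + ⟪(P - H) x, x⟫_ℝ := by
    intro x
    simp [ContinuousLinearMap.sub_apply, inner_sub_left]
  have hPlow : ∀ x : EuclideanSpace ℝ (Fin d), (μ - ν) * ‖x‖ ^ 2 ≤ ⟪P x, x⟫_ℝ := by
    intro x
    have h1 := hlow x
    have h2 := (abs_le.mp (key x)).1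
    have h3 := hdiff x
    nlinarith [sq_nonneg ‖x‖]
  have hPhigh : ∀ x : EuclideanSpace ℝ (Fin d), ⟪P x, x⟫_ℝ ≤ (M + ν) * ‖x‖ ^ 2 := by
    intro x
    have h1 := hhigh x
    have h2 := (abs_le.mp (key x)).2
    have h3 := hdiff x
    nlinarith [sq_nonneg ‖x‖]
  have hinj : Function.Injective P := by
    intro x y hxy
    have hz : P (x - y) = 0 := by simp [map_sub, hxy]
    by_contra hne
    have hxy0 : x - y ≠ 0 := sub_ne_zero.mpr fun h => hne h
    have hn : 0 < ‖x - y‖ := norm_pos_iff.mpr hxy0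
    have := hPlow (x - y)
    rw [hz] at this
    simp only [inner_zero_left] at this
    nlinarith [mul_pos (sub_pos.mpr hνμ) (pow_pos hn 2)]
  constructor
  · exact ⟨hinj, (LinearMap.injective_iff_surjective (f := P.toLinearMap)).mp hinj⟩
  · intro lam v hv hev
    have hnv : 0 < ‖v‖ := norm_pos_iff.mpr hv
    have hn : 0 < ‖v‖ ^ 2 := by positivity
    have hb : 0 < ⟪P v, v⟫_ℝ := lt_of_lt_of_le (by nlinarith) (hPlow v)
    have heq : ⟪H v, v⟫_ℝ = lam * ⟪P v, v⟫_ℝ := by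
      rw [hev, real_inner_smul_left]
    have hHl := hlow v
    have hHh := hhigh v
    have hPl := hPlow v
    have hPh := hPhigh v
    have hlam : 0 < lam := by nlinarith
    constructor
    · rw [div_le_iff₀ (by linarith)]
      nlinarith
    · rw [le_div_iff₀ (by linarith)]
      nlinarith
end

section
/- Let H be symmetric positive definite with eigenvalues in [μ, L], g ∈ ℝᵈ, and suppose v satisfies ‖Hv - g‖ ≤ ε with ε ≤ β √(μ/L) ‖g‖ for some β ∈ [0,1). Then (1 - β)√(gᵀH⁻¹g) ≤ √(vᵀHv) ≤ (1 + β)√(gᵀH⁻¹g). -/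
open scoped InnerProductSpace

/-!
Measure everything in the energy norm `‖x‖_H = √⟪H x, x⟫`, the norm of `H^{1/2} x`; it satisfies
the triangle inequality by Cauchy–Schwarz for the form `⟪H x, y⟫`. With `w = H⁻¹ g`, the error
`v - w` has energy `‖v - w‖_H ≤ ‖H v - g‖ / √μ ≤ β ‖g‖ / √L`, and `‖g‖ = ‖H w‖ ≤ √L ‖w‖_H`.
Hence `|‖v‖_H - ‖w‖_H| ≤ β ‖w‖_H`, and `‖w‖_H² = ⟪g, w⟫`, `‖v‖_H² = ⟪v, H v⟫`.
-/

theorem le_of_sq_le_mul {a b : ℝ} (hb : 0 ≤ b) (h : a ^ 2 ≤ a * b) : a ≤ b := by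
  nlinarith

namespace ContinuousLinearMap

variable {E : Type*} [NormedAddCommGroup E] [InnerProductSpace ℝ E]

noncomputable def energyNorm (H : E →L[ℝ] E) (x : E) : ℝ := √⟪H x, x⟫_ℝ

variable {H : E →L[ℝ] E}

theorem energyNorm_nonneg (x : E) : 0 ≤ energyNorm H x := Real.sqrt_nonneg _

theorem energyNorm_neg (x : E) : energyNorm H (-x) = energyNorm H x := by
  simp [energyNorm]

theorem energyNorm_sq {x : E} (hx : 0 ≤ ⟪H x, x⟫_ℝ) : energyNorm H x ^ 2 = ⟪H x, x⟫_ℝ :=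
  Real.sq_sqrt hx

theorem IsPositive.real_inner_apply_sq_le (hH : H.IsPositive) (x y : E) :
    ⟪H x, y⟫_ℝ ^ 2 ≤ ⟪H x, x⟫_ℝ * ⟪H y, y⟫_ℝ :=
  LinearMap.BilinForm.apply_sq_le_of_symm ((innerₗ E).comp H.toLinearMap)
    hH.inner_nonneg_left
    ⟨fun x y => (hH.inner_left_eq_inner_right x y).trans (real_inner_comm _ _)⟩ x y

theorem IsPositive.real_inner_apply_le_energyNorm_mul (hH : H.IsPositive) (x y : E) :
    ⟪H x, y⟫_ℝ ≤ energyNorm H x * energyNorm H y := by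
  rw [energyNorm, energyNorm, ← Real.sqrt_mul (hH.inner_nonneg_left x)]
  exact Real.le_sqrt_of_sq_le (hH.real_inner_apply_sq_le x y)

theorem IsPositive.energyNorm_add_le (hH : H.IsPositive) (x y : E) :
    energyNorm H (x + y) ≤ energyNorm H x + energyNorm H y := by
  refine Real.sqrt_le_iff.mpr ⟨add_nonneg (energyNorm_nonneg x) (energyNorm_nonneg y), ?_⟩
  have hxy := hH.real_inner_apply_le_energyNorm_mul x y
  have hyx := hH.real_inner_apply_le_energyNorm_mul y x
  simp only [map_add, inner_add_left, inner_add_right]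
  nlinarith [energyNorm_sq (hH.inner_nonneg_left x), energyNorm_sq (hH.inner_nonneg_left y)]

theorem IsPositive.abs_energyNorm_sub_energyNorm_le (hH : H.IsPositive) (x y : E) :
    |energyNorm H x - energyNorm H y| ≤ energyNorm H (x - y) := by
  have h₁ := hH.energyNorm_add_le (x - y) y
  have h₂ := hH.energyNorm_add_le (y - x) x
  rw [sub_add_cancel] at h₁
  rw [sub_add_cancel, ← neg_sub, energyNorm_neg] at h₂
  exact abs_sub_le_iff.mpr ⟨by linarith, by linarith⟩

theorem IsPositive.norm_apply_le_sqrt_mul_energyNorm (hH : H.IsPositive) {L : ℝ}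
    (hHL : ∀ x, ⟪H x, x⟫_ℝ ≤ L * ‖x‖ ^ 2) (x : E) :
    ‖H x‖ ≤ √L * energyNorm H x := by
  have hHx : energyNorm H (H x) ≤ √L * ‖H x‖ := by
    rw [energyNorm, ← Real.sqrt_sq (norm_nonneg (H x)), ← Real.sqrt_mul' _ (sq_nonneg _)]
    exact Real.sqrt_le_sqrt (hHL (H x))
  refine le_of_sq_le_mul (mul_nonneg (Real.sqrt_nonneg L) (energyNorm_nonneg x)) ?_
  calc ‖H x‖ ^ 2 = ⟪H x, H x⟫_ℝ := (real_inner_self_eq_norm_sq _).symm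
    _ ≤ energyNorm H x * energyNorm H (H x) := hH.real_inner_apply_le_energyNorm_mul x (H x)
    _ ≤ energyNorm H x * (√L * ‖H x‖) := by gcongr; exact energyNorm_nonneg x
    _ = ‖H x‖ * (√L * energyNorm H x) := by ring

theorem energyNorm_le_norm_apply_div_sqrt {μ : ℝ} (hμ : 0 < μ)
    (hμH : ∀ x, μ * ‖x‖ ^ 2 ≤ ⟪H x, x⟫_ℝ) (x : E) :
    energyNorm H x ≤ ‖H x‖ / √μ := by
  have hx : √μ * ‖x‖ ≤ energyNorm H x := by
    rw [energyNorm, ← Real.sqrt_sq (norm_nonneg x), ← Real.sqrt_mul hμ.le]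
    exact Real.sqrt_le_sqrt (hμH x)
  rw [le_div_iff₀ (Real.sqrt_pos.mpr hμ)]
  refine le_of_sq_le_mul (by positivity) ?_
  calc (energyNorm H x * √μ) ^ 2 = √μ ^ 2 * ⟪H x, x⟫_ℝ := by
        rw [mul_pow, energyNorm_sq ((by positivity : 0 ≤ μ * ‖x‖ ^ 2).trans (hμH x)), mul_comm]
    _ ≤ √μ ^ 2 * (‖H x‖ * ‖x‖) := by gcongr; exact real_inner_le_norm _ _
    _ = (√μ * ‖x‖) * (√μ * ‖H x‖) := by ring
    _ ≤ energyNorm H x * (√μ * ‖H x‖) := by gcongr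
    _ = energyNorm H x * √μ * ‖H x‖ := by ring

end ContinuousLinearMap

open ContinuousLinearMap in
theorem stmt6_general (d : ℕ)
    (H : EuclideanSpace ℝ (Fin d) →L[ℝ] EuclideanSpace ℝ (Fin d))
    (hHsym : IsSelfAdjoint H)
    (μ L : ℝ) (hμ : 0 < μ) (hμL : μ ≤ L)
    (hlow : ∀ x, μ * ‖x‖ ^ 2 ≤ ⟪H x, x⟫_ℝ)
    (hhigh : ∀ x, ⟪H x, x⟫_ℝ ≤ L * ‖x‖ ^ 2)
    (g v w : EuclideanSpace ℝ (Fin d)) (hw : H w = g)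
    (β ε : ℝ) (hβ0 : 0 ≤ β)
    (hε : ‖H v - g‖ ≤ ε) (hεsmall : ε ≤ β * Real.sqrt (μ / L) * ‖g‖) :
    (1 - β) * Real.sqrt ⟪g, w⟫_ℝ ≤ Real.sqrt ⟪v, H v⟫_ℝ ∧
      Real.sqrt ⟪v, H v⟫_ℝ ≤ (1 + β) * Real.sqrt ⟪g, w⟫_ℝ := by
  have hH : H.IsPositive := (isPositive_iff' H).mpr
    ⟨hHsym, fun x => (by positivity : 0 ≤ μ * ‖x‖ ^ 2).trans (hlow x)⟩
  have hL : 0 < √L := Real.sqrt_pos.mpr (hμ.trans_le hμL)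
  have herr : energyNorm H (v - w) ≤ β * energyNorm H w := calc
    energyNorm H (v - w) ≤ ‖H v - g‖ / √μ := by
      simpa only [map_sub, hw] using energyNorm_le_norm_apply_div_sqrt hμ hlow (v - w)
    _ ≤ β * √(μ / L) * ‖g‖ / √μ := by gcongr; exact hε.trans hεsmall
    _ = β * (‖H w‖ / √L) := by
      rw [Real.sqrt_div hμ.le, hw]; field_simp
    _ ≤ β * energyNorm H w := by
      gcongr; exact (div_le_iff₀' hL).mpr (hH.norm_apply_le_sqrt_mul_energyNorm hhigh w)
  have hgw : √⟪g, w⟫_ℝ = energyNorm H w := by rw [← hw]; rfl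
  have hvv : √⟪v, H v⟫_ℝ = energyNorm H v := by rw [real_inner_comm]; rfl
  rw [hgw, hvv]
  have := abs_le.mp ((hH.abs_energyNorm_sub_energyNorm_le v w).trans herr)
  constructor <;> linarith

/-- If `H` is symmetric positive definite with eigenvalues in `[μ, L]`, `H w = g` (so
`w = H⁻¹g`), and `v` satisfies `‖Hv - g‖ ≤ ε` with `ε ≤ β √(μ/L) ‖g‖`, `β ∈ [0,1)`, then
`(1 - β) √(gᵀH⁻¹g) ≤ √(vᵀHv) ≤ (1 + β) √(gᵀH⁻¹g)`. -/
theorem stmt6 (d : ℕ)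
    (H : EuclideanSpace ℝ (Fin d) →L[ℝ] EuclideanSpace ℝ (Fin d))
    (hHsym : IsSelfAdjoint H)
    (μ L : ℝ) (hμ : 0 < μ) (hμL : μ ≤ L)
    (hlow : ∀ x, μ * ‖x‖ ^ 2 ≤ ⟪H x, x⟫_ℝ)
    (hhigh : ∀ x, ⟪H x, x⟫_ℝ ≤ L * ‖x‖ ^ 2)
    (g v w : EuclideanSpace ℝ (Fin d)) (hw : H w = g)
    (β ε : ℝ) (hβ0 : 0 ≤ β) (hβ1 : β < 1)
    (hε : ‖H v - g‖ ≤ ε) (hεsmall : ε ≤ β * Real.sqrt (μ / L) * ‖g‖) :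
    (1 - β) * Real.sqrt ⟪g, w⟫_ℝ ≤ Real.sqrt ⟪v, H v⟫_ℝ ∧
      Real.sqrt ⟪v, H v⟫_ℝ ≤ (1 + β) * Real.sqrt ⟪g, w⟫_ℝ :=
  stmt6_general d H hHsym μ L hμ hμL hlow hhigh g v w hw β ε hβ0 hε hεsmall
end

section
/- Let δ, β ∈ (0,1) with β ≤ 1/20, and let u, v ≥ 0 satisfy (1-β)u ≤ v ≤ (1+β)u. If v ≤ (1-β)√V for some V ∈ (0, 0.68²], then u ≤ 0.68 and ω*(u) ≤ V, where ω*(t) = -t - log(1-t). -/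
/-!
With `g t = t² + t + log (1 - t)` we have `g' t = t (1 - 2t) / (1 - t)`, so `g` increases on
`[0, 1/2]` and decreases on `[1/2, 1)`. Hence `g ≥ 0` on `[0, 0.68]` as soon as `g 0 = 0` and
`g 0.68 ≥ 0`; the latter is `exp 1.1424 ≥ 1 / 0.32`, which follows from `e > 2.71828` and
`exp x ≥ 1 + x + x² / 2`. This gives `ω*(u) ≤ u²`, and the stopping rule forces `u ≤ √V`.
-/

open Real Set

lemma hasDerivAt_sq_add_add_log_one_sub {t : ℝ} (ht : t < 1) :
    HasDerivAt (fun s ↦ s ^ 2 + s + log (1 - s)) (t * (1 - 2 * t) / (1 - t)) t := by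
  have hne : 1 - t ≠ 0 := by linarith
  have hlog : HasDerivAt (fun s ↦ log (1 - s)) (-1 / (1 - t)) t := by
    simpa using ((hasDerivAt_id t).const_sub 1).log hne
  refine ((((hasDerivAt_id' t).pow 2).add (hasDerivAt_id' t)).add hlog).congr_deriv ?_
  field_simp
  ring

lemma continuousOn_sq_add_add_log_one_sub {a b : ℝ} (hb : b < 1) :
    ContinuousOn (fun s ↦ s ^ 2 + s + log (1 - s)) (Icc a b) := fun _ ht ↦
  (hasDerivAt_sq_add_add_log_one_sub (ht.2.trans_lt hb)).continuousAt.continuousWithinAt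

lemma monotoneOn_sq_add_add_log_one_sub :
    MonotoneOn (fun s ↦ s ^ 2 + s + log (1 - s)) (Icc 0 (1 / 2)) := by
  refine monotoneOn_of_hasDerivWithinAt_nonneg (f' := fun t ↦ t * (1 - 2 * t) / (1 - t))
    (convex_Icc _ _)
    (continuousOn_sq_add_add_log_one_sub (by norm_num)) (fun t ht ↦ ?_) fun t ht ↦ ?_
  all_goals rw [interior_Icc] at ht; obtain ⟨ht0, ht1⟩ := ht
  · exact (hasDerivAt_sq_add_add_log_one_sub (by linarith)).hasDerivWithinAt
  · exact div_nonneg (mul_nonneg ht0.le (by linarith)) (by linarith)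

lemma antitoneOn_sq_add_add_log_one_sub {b : ℝ} (hb : b < 1) :
    AntitoneOn (fun s ↦ s ^ 2 + s + log (1 - s)) (Icc (1 / 2) b) := by
  refine antitoneOn_of_hasDerivWithinAt_nonpos (f' := fun t ↦ t * (1 - 2 * t) / (1 - t))
    (convex_Icc _ _)
    (continuousOn_sq_add_add_log_one_sub hb) (fun t ht ↦ ?_) fun t ht ↦ ?_
  all_goals rw [interior_Icc] at ht; obtain ⟨ht0, ht1⟩ := ht
  · exact (hasDerivAt_sq_add_add_log_one_sub (by linarith)).hasDerivWithinAt
  · exact div_nonpos_of_nonpos_of_nonneg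
      (mul_nonpos_of_nonneg_of_nonpos (by linarith) (by linarith)) (by linarith)

lemma sq_add_add_log_one_sub_nonneg_at_0_68 : 0 ≤ (0.68 : ℝ) ^ 2 + 0.68 + log (1 - 0.68) := by
  have hsplit : exp 1.1424 = exp 1 * exp 0.1424 := by rw [← exp_add]; norm_num
  have he : 2.7182818283 < exp 1 := exp_one_gt_d9
  have hq : 1 + 0.1424 + 0.1424 ^ 2 / 2 ≤ exp 0.1424 := quadratic_le_exp_of_nonneg (by norm_num)
  have hexp : 1 ≤ 0.32 * exp 1.1424 := by
    rw [hsplit]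
    nlinarith [exp_pos 0.1424]
  have hlog : -1.1424 ≤ log 0.32 := by
    rw [le_log_iff_exp_le (by norm_num), exp_neg, inv_le_iff_one_le_mul₀ (exp_pos _)]
    linarith
  norm_num
  linarith

lemma neg_sub_log_one_sub_le_sq {u : ℝ} (hu0 : 0 ≤ u) (hu1 : u ≤ 0.68) :
    -u - log (1 - u) ≤ u ^ 2 := by
  suffices 0 ≤ u ^ 2 + u + log (1 - u) by linarith
  rcases le_total u (1 / 2) with hu | hu
  · simpa using monotoneOn_sq_add_add_log_one_sub ⟨le_rfl, by norm_num⟩ ⟨hu0, hu⟩ hu0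
  · exact sq_add_add_log_one_sub_nonneg_at_0_68.trans
      (antitoneOn_sq_add_add_log_one_sub (by norm_num) ⟨hu, hu1⟩ ⟨by norm_num, le_rfl⟩ hu1)

theorem stmt8_general (β u v V : ℝ) (hβ1 : β < 1)
    (hu : 0 ≤ u)
    (h1 : (1 - β) * u ≤ v)
    (hV0 : 0 < V) (hV : V ≤ 0.68 ^ 2)
    (hstop : v ≤ (1 - β) * Real.sqrt V) :
    u ≤ 0.68 ∧ -u - Real.log (1 - u) ≤ V := by
  have hu_le_sqrt : u ≤ √V := le_of_mul_le_mul_left (h1.trans hstop) (by linarith)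
  have hu_sq : u ^ 2 ≤ V := (le_sqrt hu hV0.le).1 hu_le_sqrt
  have hu68 : u ≤ 0.68 := (pow_le_pow_iff_left₀ hu (by norm_num) two_ne_zero).1 (hu_sq.trans hV)
  exact ⟨hu68, (neg_sub_log_one_sub_le_sq hu hu68).trans hu_sq⟩

/-- Practical stopping criterion: if `β ∈ (0,1)` with `β ≤ 1/20`, `0 ≤ u`, `0 ≤ v`,
`(1-β)u ≤ v ≤ (1+β)u`, and `v ≤ (1-β)√V` for some `V ∈ (0, 0.68²]`, then `u ≤ 0.68` and
`ω*(u) = -u - log(1-u) ≤ V`. -/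
theorem stmt8 (β u v V : ℝ) (hβ0 : 0 < β) (hβ1 : β < 1) (hβ : β ≤ 1 / 20)
    (hu : 0 ≤ u) (hv : 0 ≤ v)
    (h1 : (1 - β) * u ≤ v) (h2 : v ≤ (1 + β) * u)
    (hV0 : 0 < V) (hV : V ≤ 0.68 ^ 2)
    (hstop : v ≤ (1 - β) * Real.sqrt V) :
    u ≤ 0.68 ∧ -u - Real.log (1 - u) ≤ V :=
  stmt8_general β u v V hβ1 hu h1 hV0 hV hstop
end
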